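/- There exists a map f : ℝ² → ℝ³ that is 1-Lipschitz on the closed disk of radius π centered at the origin and whose image of that closed disk is exactly the unit sphere {y ∈ ℝ³ : ‖y‖ = 1}. -/

import Mathlib

/-!
Take the exponential map of the unit sphere of `ℝ² × ℝ` at the pole `(0, 1)`,
`x ↦ (sinc ‖x‖ • x, cos ‖x‖)`. It maps the disk of radius `π` onto the sphere (the boundary
circle collapses to the antipodal pole). With `r = ‖x‖`, `s = ‖y‖`, the squared chord between the
images of `x` and `y` is `2 - 2 cos r cos s - 2 sinc r sinc s ⟪x, y⟫`, while
`‖x - y‖² = r² + s² - 2 ⟪x, y⟫`. Since `sinc r sinc s · rs = sin r sin s`, the difference splits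
into `(r - s)² - (2 - 2 cos (r - s)) ≥ 0` and `(1 - sinc r sinc s)(rs - ⟪x, y⟫) ≥ 0`, the latter
by Cauchy–Schwarz and `|sinc| ≤ 1`; so the map is even `1`-Lipschitz on all of `ℝ²`.
-/

open Real Metric
open scoped InnerProductSpace

namespace Real

lemma sinc_mul_self (x : ℝ) : sinc x * x = sin x := by
  rcases eq_or_ne x 0 with rfl | hx
  · simp
  · rw [sinc_of_ne_zero hx, div_mul_cancel₀ _ hx]

lemma two_sub_two_mul_cos_le_sq (u : ℝ) : 2 - 2 * cos u ≤ u ^ 2 := by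
  linarith [one_sub_sq_div_two_le_cos (x := u)]

end Real

lemma two_sub_cos_mul_cos_sub_sinc_mul_sinc_le {r s p : ℝ} (hp : p ≤ r * s) :
    2 - 2 * (cos r * cos s) - 2 * (sinc r * sinc s) * p ≤ r ^ 2 + s ^ 2 - 2 * p := by
  have hsinc : sinc r * sinc s ≤ 1 := by
    refine (le_abs_self _).trans ?_
    rw [abs_mul]
    exact mul_le_one₀ (abs_sinc_le_one r) (abs_nonneg _) (abs_sinc_le_one s)
  have hsin : sinc r * sinc s * (r * s) = sin r * sin s := by
    rw [← sinc_mul_self r, ← sinc_mul_self s]; ring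
  have hcos := two_sub_two_mul_cos_le_sq (r - s)
  rw [cos_sub] at hcos
  linarith [mul_le_of_le_one_left (sub_nonneg.2 hp) hsinc]

variable {E : Type*} [NormedAddCommGroup E] [InnerProductSpace ℝ E]

/-- The exponential map of the unit sphere of `E × ℝ` at the pole `(0, 1)`. -/
noncomputable def sphereExp (x : E) : WithLp 2 (E × ℝ) :=
  WithLp.toLp 2 (sinc ‖x‖ • x, cos ‖x‖)

lemma norm_sinc_norm_smul (x : E) : ‖sinc ‖x‖ • x‖ = |sin ‖x‖| := by
  rw [norm_smul, Real.norm_eq_abs, ← abs_norm x, ← abs_mul, abs_norm, sinc_mul_self]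

lemma norm_sphereExp (x : E) : ‖sphereExp x‖ = 1 := by
  rw [← sq_eq_sq₀ (norm_nonneg _) zero_le_one, one_pow, WithLp.prod_norm_sq_eq_of_L2]
  simp [sphereExp, norm_sinc_norm_smul, sq_abs, sin_sq_add_cos_sq]

lemma dist_sphereExp_sq (x y : E) :
    dist (sphereExp x) (sphereExp y) ^ 2
      = 2 - 2 * (cos ‖x‖ * cos ‖y‖) - 2 * (sinc ‖x‖ * sinc ‖y‖) * ⟪x, y⟫_ℝ := by
  rw [dist_eq_norm, WithLp.prod_norm_sq_eq_of_L2]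
  simp only [sphereExp, WithLp.sub_fst, WithLp.sub_snd, WithLp.toLp_fst, WithLp.toLp_snd,
    norm_sub_sq_real, norm_sinc_norm_smul, sq_abs, real_inner_smul_left, real_inner_smul_right,
    Real.norm_eq_abs]
  linear_combination sin_sq_add_cos_sq ‖x‖ + sin_sq_add_cos_sq ‖y‖

theorem lipschitzWith_sphereExp : LipschitzWith 1 (sphereExp (E := E)) := by
  refine LipschitzWith.of_dist_le_mul fun x y ↦ ?_
  rw [NNReal.coe_one, one_mul, ← sq_le_sq₀ dist_nonneg dist_nonneg, dist_sphereExp_sq,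
    dist_eq_norm, norm_sub_sq_real]
  linarith [two_sub_cos_mul_cos_sub_sinc_mul_sinc_le (real_inner_le_norm x y)]

lemma exists_norm_eq_one_smul_eq [Nontrivial E] (v : E) : ∃ w : E, ‖w‖ = 1 ∧ ‖v‖ • w = v := by
  rcases eq_or_ne v 0 with rfl | hv
  · obtain ⟨w, hw⟩ := exists_norm_eq E zero_le_one
    exact ⟨w, hw, by simp⟩
  · exact ⟨‖v‖⁻¹ • v, norm_smul_inv_norm hv, smul_inv_smul₀ (norm_ne_zero_iff.2 hv) v⟩

lemma sphereExp_smul {r : ℝ} (hr : 0 ≤ r) {w : E} (hw : ‖w‖ = 1) :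
    sphereExp (r • w) = WithLp.toLp 2 (sin r • w, cos r) := by
  rw [sphereExp, norm_smul, hw, mul_one, Real.norm_of_nonneg hr, smul_smul, sinc_mul_self]

lemma sphere_subset_sphereExp_image_closedBall [Nontrivial E] :
    sphere (0 : WithLp 2 (E × ℝ)) 1 ⊆ sphereExp '' closedBall (0 : E) π := by
  intro p hp
  have hp₁ : ‖p.fst‖ ^ 2 + p.snd ^ 2 = 1 := by
    rw [← sq_abs p.snd, ← Real.norm_eq_abs, ← WithLp.prod_norm_sq_eq_of_L2,
      mem_sphere_zero_iff_norm.1 hp, one_pow]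
  obtain ⟨w, hw, hpw⟩ := exists_norm_eq_one_smul_eq p.fst
  refine ⟨arccos p.snd • w, ?_, ?_⟩
  · rw [mem_closedBall_zero_iff, norm_smul, hw, mul_one, Real.norm_of_nonneg (arccos_nonneg _)]
    exact arccos_le_pi _
  · rw [sphereExp_smul (arccos_nonneg _) hw, cos_arccos (by nlinarith) (by nlinarith), sin_arccos,
      ← hp₁, add_sub_cancel_right, sqrt_sq (norm_nonneg _), hpw]
    rfl

theorem sphereExp_image_closedBall [Nontrivial E] :
    sphereExp '' closedBall (0 : E) π = sphere 0 1 :=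
  Set.Subset.antisymm
    (Set.image_subset_iff.2 fun x _ ↦ mem_sphere_zero_iff_norm.2 (norm_sphereExp x))
    sphere_subset_sphereExp_image_closedBall

/-- There is a map ℝ² → ℝ³ that is 1-Lipschitz on the closed disk of radius π centered
at the origin and maps that closed disk exactly onto the unit sphere of ℝ³. -/
theorem exists_lipschitzOnWith_one_image_closedBall_eq_unitSphere :
    ∃ f : EuclideanSpace ℝ (Fin 2) → EuclideanSpace ℝ (Fin 3),
      LipschitzOnWith 1 f (Metric.closedBall (0 : EuclideanSpace ℝ (Fin 2)) π) ∧
      f '' Metric.closedBall (0 : EuclideanSpace ℝ (Fin 2)) π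
        = {y : EuclideanSpace ℝ (Fin 3) | ‖y‖ = 1} := by
  have hrank : Module.finrank ℝ (WithLp 2 (EuclideanSpace ℝ (Fin 2) × ℝ)) = 3 := by
    rw [(WithLp.linearEquiv 2 ℝ _).finrank_eq, Module.finrank_prod, finrank_euclideanSpace_fin,
      Module.finrank_self]
  let e := ((stdOrthonormalBasis ℝ _).reindex (finCongr hrank)).repr
  refine ⟨e ∘ sphereExp,
    by simpa using (e.lipschitz.comp lipschitzWith_sphereExp).lipschitzOnWith, ?_⟩
  rw [Set.image_comp, sphereExp_image_closedBall, e.image_sphere, map_zero]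
  ext y
  exact mem_sphere_zero_iff_norm
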